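/- arXiv:2404.10023 — 8 statements merged into one kernel-verified Lean document; each statement's English description precedes it below -/
import Mathlib

section
/- Let G = (V,E) be a finite simple graph, k a natural number, and S ⊆ V a set such that G − S is a cluster graph. Suppose s ∈ S has at least one neighbor in each of at least k+2 pairwise distinct connected components of G − S. Then every set X ⊆ V with |X| ≤ k such that G − X is a cluster graph satisfies s ∈ X. -/
namespace Paper

/-- The graph `G - S` obtained from `G` by deleting the vertices of `S`: edges of `G`
with both endpoints outside `S` (vertices of `S` become isolated). -/
def restrictOutside {V : Type*} (G : SimpleGraph V) (S : Set V) : SimpleGraph V where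
  Adj x y := G.Adj x y ∧ x ∉ S ∧ y ∉ S
  symm := ⟨fun _ _ h => ⟨h.1.symm, h.2.2, h.2.1⟩⟩
  loopless := ⟨fun x h => G.loopless.irrefl x h.1⟩

/-- The vertex set of the connected component of `v` in `G`. -/
def compSet {V : Type*} (G : SimpleGraph V) (v : V) : Set V := {w | G.Reachable v w}

/-- A cluster graph: no induced `P₃`; equivalently, every connected component induces a clique. -/
def IsClusterGraph {V : Type*} (G : SimpleGraph V) : Prop :=
  ∀ ⦃x y z : V⦄, G.Adj x y → G.Adj y z → x ≠ z → G.Adj x z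

/-- `G - X` is a disjoint union of cliques each on exactly `c` vertices. -/
def IsUniformClusterDel {V : Type*} (G : SimpleGraph V) (X : Set V) (c : ℕ) : Prop :=
  ∀ w ∉ X, (restrictOutside G X).IsClique (compSet (restrictOutside G X) w) ∧
    (compSet (restrictOutside G X) w).ncard = c

/-
Two neighbours `t₁ ≠ t₂` of `s` lying in different components of `G - S` are not adjacent in `G`.
If `s ∉ X` and both survive in `G - X`, then `t₁ - s - t₂` is an induced `P₃` of `G - X`.
So a solution `X` avoiding `s` must contain all but at most one of the `k + 2` neighbours,
forcing `|X| ≥ k + 1`.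
-/

lemma card_filter_not_mem_le_one_of_isClusterGraph {V : Type*} [DecidableEq V]
    {G : SimpleGraph V} {X : Set V} [DecidablePred (· ∈ X)]
    (hX : IsClusterGraph (restrictOutside G X)) {s : V} (hs : s ∉ X) {T : Finset V}
    (hTadj : ∀ t ∈ T, G.Adj s t)
    (hTindep : ∀ t₁ ∈ T, ∀ t₂ ∈ T, t₁ ≠ t₂ → ¬ G.Adj t₁ t₂) :
    (T.filter (· ∉ X)).card ≤ 1 := by
  refine Finset.card_le_one.mpr fun t₁ ht₁ t₂ ht₂ => by_contra fun hne => ?_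
  rw [Finset.mem_filter] at ht₁ ht₂
  have h₁ : (restrictOutside G X).Adj s t₁ := ⟨hTadj t₁ ht₁.1, hs, ht₁.2⟩
  have h₂ : (restrictOutside G X).Adj s t₂ := ⟨hTadj t₂ ht₂.1, hs, ht₂.2⟩
  exact hTindep t₁ ht₁.1 t₂ ht₂.1 hne (hX h₁.symm h₂ hne).1

lemma card_filter_mem_le_ncard {V : Type*} (T : Finset V) {X : Set V} [DecidablePred (· ∈ X)]
    (hX : X.Finite) : (T.filter (· ∈ X)).card ≤ X.ncard := by
  rw [← Set.ncard_coe_finset]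
  exact Set.ncard_le_ncard (fun _ ht => (Finset.mem_filter.mp ht).2) hX

theorem stmt0_general {V : Type*} [Fintype V] (G : SimpleGraph V) (k : ℕ) (S : Set V)
    (s : V)
    (T : Finset V) (hTcard : k + 2 ≤ T.card)
    (hTS : ∀ t ∈ T, t ∉ S)
    (hTadj : ∀ t ∈ T, G.Adj s t)
    (hTdistinct : ∀ t₁ ∈ T, ∀ t₂ ∈ T, t₁ ≠ t₂ →
      ¬ (restrictOutside G S).Reachable t₁ t₂)
    (X : Set V) (hXcard : X.ncard ≤ k)
    (hXcluster : IsClusterGraph (restrictOutside G X)) :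
    s ∈ X := by
  classical
  by_contra hsX
  have hTindep : ∀ t₁ ∈ T, ∀ t₂ ∈ T, t₁ ≠ t₂ → ¬ G.Adj t₁ t₂ := fun t₁ h₁ t₂ h₂ hne hadj =>
    hTdistinct t₁ h₁ t₂ h₂ hne (show (restrictOutside G S).Adj t₁ t₂ from
      ⟨hadj, hTS t₁ h₁, hTS t₂ h₂⟩).reachable
  have hout := card_filter_not_mem_le_one_of_isClusterGraph hXcluster hsX hTadj hTindep
  have hin := card_filter_mem_le_ncard T X.toFinite
  have hsplit := Finset.card_filter_add_card_filter_not (s := T) (p := (· ∈ X))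
  omega

/-- If `G - S` is a cluster graph and `s ∈ S` has a neighbor in each of at least `k + 2`
pairwise distinct connected components of `G - S` (witnessed by the neighbors in `T`),
then every `X` of size at most `k` with `G - X` a cluster graph contains `s`. -/
theorem stmt0 {V : Type*} [Fintype V] (G : SimpleGraph V) (k : ℕ) (S : Set V)
    (hcluster : IsClusterGraph (restrictOutside G S))
    (s : V) (hsS : s ∈ S)
    (T : Finset V) (hTcard : k + 2 ≤ T.card)
    (hTS : ∀ t ∈ T, t ∉ S)
    (hTadj : ∀ t ∈ T, G.Adj s t)
    (hTdistinct : ∀ t₁ ∈ T, ∀ t₂ ∈ T, t₁ ≠ t₂ →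
      ¬ (restrictOutside G S).Reachable t₁ t₂)
    (X : Set V) (hXcard : X.ncard ≤ k)
    (hXcluster : IsClusterGraph (restrictOutside G X)) :
    s ∈ X :=
  stmt0_general G k S s T hTcard hTS hTadj hTdistinct X hXcard hXcluster

end Paper
end

section
/- Let G = (V,E) be a finite simple graph, k a natural number, and S ⊆ V a set such that G − S is a cluster graph. Suppose s ∈ S has at least k+1 neighbors inside some connected component C of G − S and more than k neighbors in (V ∖ S) ∖ C. Then every set X ⊆ V with |X| ≤ k such that G − X is a cluster graph satisfies s ∈ X. -/
/-! If `s ∉ X`, then since `|X| ≤ k`, some neighbour `a` of `s` in `C` and some neighbour `b` of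
`s` in `(V ∖ S) ∖ C` survive in `G − X`. There `a – s – b` is a path, so `a` and `b` are adjacent
because `G − X` is a cluster graph. As `a, b ∉ S`, that edge lies in `G − S`, which puts `b` into
the component `C` of `a`: a contradiction. -/

namespace Paper

section

variable {V : Type*} {G : SimpleGraph V} {S : Set V}

lemma notMem_of_walk_restrictOutside :
    ∀ {v w : V}, (restrictOutside G S).Walk v w → v ∉ S → w ∉ S
  | _, _, .nil, hv => hv
  | _, _, .cons h p, _ => notMem_of_walk_restrictOutside p h.2.2

lemma mem_compSet_restrictOutside_of_adj {v a b : V} (hv : v ∉ S)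
    (ha : a ∈ compSet (restrictOutside G S) v) (hb : b ∉ S) (hab : G.Adj a b) :
    b ∈ compSet (restrictOutside G S) v :=
  have haS : a ∉ S := ha.elim fun p => notMem_of_walk_restrictOutside p hv
  ha.trans (SimpleGraph.Adj.reachable ⟨hab, haS, hb⟩)

lemma IsClusterGraph.adj_of_restrictOutside {X : Set V}
    (hX : IsClusterGraph (restrictOutside G X)) {a s b : V} (has : G.Adj a s) (hsb : G.Adj s b)
    (haX : a ∉ X) (hsX : s ∉ X) (hbX : b ∉ X) (hab : a ≠ b) : G.Adj a b :=
  (hX ⟨has, haX, hsX⟩ ⟨hsb, hsX, hbX⟩ hab).1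

end

theorem stmt1_general {V : Type*} [Fintype V] (G : SimpleGraph V) (k : ℕ) (S : Set V)
    (s : V)
    (v : V) (hvS : v ∉ S)
    (C : Set V) (hC : C = compSet (restrictOutside G S) v)
    (hin : k + 1 ≤ (C ∩ G.neighborSet s).ncard)
    (hout : k < (({t : V | t ∉ S ∧ t ∉ C}) ∩ G.neighborSet s).ncard)
    (X : Set V) (hXcard : X.ncard ≤ k)
    (hXcluster : IsClusterGraph (restrictOutside G X)) :
    s ∈ X := by
  by_contra hsX
  obtain ⟨a, ⟨haC, hsa⟩, haX⟩ :=
    Set.exists_mem_notMem_of_ncard_lt_ncard (by omega : X.ncard < (C ∩ G.neighborSet s).ncard)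
  obtain ⟨b, ⟨⟨hbS, hbC⟩, hsb⟩, hbX⟩ :=
    Set.exists_mem_notMem_of_ncard_lt_ncard
      (by omega : X.ncard < ({t : V | t ∉ S ∧ t ∉ C} ∩ G.neighborSet s).ncard)
  have hab : a ≠ b := by
    rintro rfl
    exact hbC haC
  have hadj : G.Adj a b := hXcluster.adj_of_restrictOutside hsa.symm hsb haX hsX hbX hab
  subst hC
  exact hbC (mem_compSet_restrictOutside_of_adj hvS haC hbS hadj)

/-- If `G - S` is a cluster graph and `s ∈ S` has at least `k + 1` neighbors in the
connected component `C` of `G - S` and more than `k` neighbors in `(V ∖ S) ∖ C`,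
then every `X` of size at most `k` with `G - X` a cluster graph contains `s`. -/
theorem stmt1 {V : Type*} [Fintype V] (G : SimpleGraph V) (k : ℕ) (S : Set V)
    (hcluster : IsClusterGraph (restrictOutside G S))
    (s : V) (hsS : s ∈ S)
    (v : V) (hvS : v ∉ S)
    (C : Set V) (hC : C = compSet (restrictOutside G S) v)
    (hin : k + 1 ≤ (C ∩ G.neighborSet s).ncard)
    (hout : k < (({t : V | t ∉ S ∧ t ∉ C}) ∩ G.neighborSet s).ncard)
    (X : Set V) (hXcard : X.ncard ≤ k)
    (hXcluster : IsClusterGraph (restrictOutside G X)) :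
    s ∈ X :=
  stmt1_general G k S s v hvS C hC hin hout X hXcard hXcluster

end Paper
end

section
/- Let G = (V,E) be a finite simple graph, k a natural number, and S ⊆ V with |S| ≤ 3k such that G − S is a cluster graph. Let C₁ and C₂ be the vertex sets of two distinct connected components of G − S with |C₁| − |C₂| > 4k. Then every X ⊆ V with |X| ≤ k such that G − X is a uniform cluster graph satisfies C₂ ⊆ X. -/
/-!
Suppose some `u ∈ C₂` survives in `G - X`. Its component `D` in `G - X` is a clique, so every
vertex of `D` outside `S` is adjacent to `u` in `G - S`; hence `D ⊆ C₂ ∪ S` and the common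
component size `c` is at most `|C₂| + 3k`. On the other hand `|C₁| > |X|`, so some `w ∈ C₁`
survives, and since `C₁` is a clique of `G - S`, all of `C₁ \ X` lies in the component of `w`
in `G - X`; hence `c ≥ |C₁| - k`. Together these give `|C₁| ≤ |C₂| + 4k`.
-/

namespace Paper

section

variable {V : Type*} {G : SimpleGraph V} {S X : Set V} {u v w : V}

lemma notMem_of_reachable_restrictOutside (h : (restrictOutside G X).Reachable u w)
    (hu : u ∉ X) : w ∉ X := by
  obtain ⟨p⟩ := h
  induction p with
  | nil => exact hu
  | cons h _ ih => exact ih h.2.2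

lemma IsClusterGraph.adj_of_reachable {H : SimpleGraph V} (hH : IsClusterGraph H)
    {x y : V} (h : H.Reachable x y) (hne : x ≠ y) : H.Adj x y := by
  obtain ⟨p⟩ := h
  induction p with
  | nil => exact absurd rfl hne
  | @cons a b c hab _ ih =>
    by_cases hbc : b = c
    · exact hbc ▸ hab
    · exact hH hab (ih hbc) hne

lemma compSet_restrictOutside_subset_union (hD : (restrictOutside G X).IsClique
      (compSet (restrictOutside G X) u))
    (huS : u ∉ S) (hu : u ∈ compSet (restrictOutside G S) v) :
    compSet (restrictOutside G X) u ⊆ compSet (restrictOutside G S) v ∪ S := by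
  intro y hy
  by_cases hyS : y ∈ S
  · exact Or.inr hyS
  by_cases huy : u = y
  · exact Or.inl (huy ▸ hu)
  have hadj : (restrictOutside G X).Adj u y := hD (SimpleGraph.Reachable.refl u) hy huy
  exact Or.inl (SimpleGraph.Reachable.trans hu (SimpleGraph.Adj.reachable ⟨hadj.1, huS, hyS⟩))

lemma sdiff_subset_compSet_restrictOutside (hS : IsClusterGraph (restrictOutside G S))
    (hw : w ∈ compSet (restrictOutside G S) v) (hwX : w ∉ X) :
    compSet (restrictOutside G S) v \ X ⊆ compSet (restrictOutside G X) w := by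
  rintro y ⟨hy, hyX⟩
  by_cases hwy : w = y
  · exact hwy ▸ SimpleGraph.Reachable.refl w
  have hreach : (restrictOutside G S).Reachable w y := SimpleGraph.Reachable.trans
    (SimpleGraph.Reachable.symm hw) hy
  have hadj := hS.adj_of_reachable hreach hwy
  exact SimpleGraph.Adj.reachable ⟨hadj.1, hwX, hyX⟩

variable [Finite V]

lemma ncard_compSet_restrictOutside_le (hD : (restrictOutside G X).IsClique
      (compSet (restrictOutside G X) u))
    (huS : u ∉ S) (hu : u ∈ compSet (restrictOutside G S) v) :
    (compSet (restrictOutside G X) u).ncard ≤ (compSet (restrictOutside G S) v).ncard + S.ncard :=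
  (Set.ncard_le_ncard (compSet_restrictOutside_subset_union hD huS hu)).trans
    (Set.ncard_union_le _ _)

lemma ncard_compSet_le_ncard_compSet_restrictOutside_add
    (hS : IsClusterGraph (restrictOutside G S))
    (hw : w ∈ compSet (restrictOutside G S) v) (hwX : w ∉ X) :
    (compSet (restrictOutside G S) v).ncard ≤ (compSet (restrictOutside G X) w).ncard + X.ncard :=
  (Set.ncard_le_ncard_sdiff_add_ncard _ X).trans <| Nat.add_le_add_right
    (Set.ncard_le_ncard (sdiff_subset_compSet_restrictOutside hS hw hwX)) _

end

theorem stmt4_general {V : Type*} [Fintype V] (G : SimpleGraph V) (k : ℕ) (S : Set V)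
    (hScard : S.ncard ≤ 3 * k)
    (hcluster : IsClusterGraph (restrictOutside G S))
    (v₁ v₂ : V) (hv₂ : v₂ ∉ S)
    (C₁ C₂ : Set V)
    (hC₁ : C₁ = compSet (restrictOutside G S) v₁)
    (hC₂ : C₂ = compSet (restrictOutside G S) v₂)
    (hgap : C₂.ncard + 4 * k < C₁.ncard)
    (X : Set V) (hXcard : X.ncard ≤ k)
    (hX : ∃ c, IsUniformClusterDel G X c) :
    C₂ ⊆ X := by
  subst hC₁ hC₂
  obtain ⟨c, hc⟩ := hX
  intro u hu
  by_contra huX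
  obtain ⟨hclique, hcard_u⟩ := hc u huX
  have hupper := ncard_compSet_restrictOutside_le hclique
    (notMem_of_reachable_restrictOutside hu hv₂) hu
  obtain ⟨w, hw, hwX⟩ := Set.exists_mem_notMem_of_ncard_lt_ncard (s := X)
    (t := compSet (restrictOutside G S) v₁) (by omega)
  have hlower := ncard_compSet_le_ncard_compSet_restrictOutside_add hcluster hw hwX
  rw [(hc w hwX).2] at hlower
  omega

/-- If `|S| ≤ 3k`, `G - S` is a cluster graph, and `C₁, C₂` are vertex sets of two distinct
connected components of `G - S` with `|C₁| - |C₂| > 4k`, then every `X` with `|X| ≤ k` such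
that `G - X` is a uniform cluster graph satisfies `C₂ ⊆ X`. -/
theorem stmt4 {V : Type*} [Fintype V] (G : SimpleGraph V) (k : ℕ) (S : Set V)
    (hScard : S.ncard ≤ 3 * k)
    (hcluster : IsClusterGraph (restrictOutside G S))
    (v₁ v₂ : V) (hv₁ : v₁ ∉ S) (hv₂ : v₂ ∉ S)
    (C₁ C₂ : Set V)
    (hC₁ : C₁ = compSet (restrictOutside G S) v₁)
    (hC₂ : C₂ = compSet (restrictOutside G S) v₂)
    (hne : C₁ ≠ C₂)
    (hgap : C₂.ncard + 4 * k < C₁.ncard)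
    (X : Set V) (hXcard : X.ncard ≤ k)
    (hX : ∃ c, IsUniformClusterDel G X c) :
    C₂ ⊆ X :=
  stmt4_general G k S hScard hcluster v₁ v₂ hv₂ C₁ C₂ hC₁ hC₂ hgap X hXcard hX

end Paper
end

section
/- Let d ≥ 2 and let G = (V,E) be a finite simple graph without isolated vertices that admits a K_d-edge partition 𝒫 with cost(𝒫) = k ≥ 1. Then there exist a vertex u ∈ V and disjoint sets A, B with A ∪ B = N_G(u) such that the split of G at u along (A,B) (an exclusive vertex split, producing a graph G₁ on |V| + 1 vertices) admits a K_d-edge partition 𝒫′ with cost(𝒫′) = k − 1. -/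
/-!
Pick a vertex `u` lying in two parts and one part `Q₀ ∋ u`. Split `u` so that the new copy
`u*` takes over exactly the neighbours of `u` inside `Q₀`, i.e. replace `u` by `u*` in `Q₀`
and leave all other parts untouched. Two parts share at most one vertex, so the remaining
neighbours of `u` are reached only through the other parts, which stay at `u`. Hence the
lifted parts form a `K_d`-edge partition of the split graph in which `u*` has frequency one
and the frequency of `u` drops by one, so the cost drops by exactly one.
-/

namespace Paper

/-- A `K_d`-edge partition of `G`, represented by the vertex sets of its parts:
a family `P` of cliques on exactly `d` vertices such that every edge of `G` lies in the
edge set of exactly one member of `P` (so the edge sets of the members of `P` partition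
the edge set of `G`). -/
def KEdgePartition {V : Type*} (G : SimpleGraph V) (d : ℕ) (P : Finset (Finset V)) : Prop :=
  (∀ Q ∈ P, G.IsClique (Q : Set V) ∧ Q.card = d) ∧
  (∀ x y : V, G.Adj x y → ∃! Q : Finset V, Q ∈ P ∧ x ∈ Q ∧ y ∈ Q)

/-- `freq_𝒫(v)`: the number of parts of `𝒫` containing an edge incident to `v`,
i.e. the number of members of `P` containing `v`. -/
def freqP {V : Type*} [DecidableEq V] (P : Finset (Finset V)) (v : V) : ℕ :=
  (P.filter fun Q => v ∈ Q).card

/-- `cost(𝒫) = Σ_v max(0, freq_𝒫(v) - 1)`. -/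
def costP {V : Type*} [Fintype V] [DecidableEq V] (P : Finset (Finset V)) : ℕ :=
  ∑ v : V, (freqP P v - 1)
/-- The split of `G` at `u` along `(A, B)`: a fresh vertex `none` is added; the copy `u`
keeps exactly the neighbors in `A`, the new copy `none` gets exactly the neighbors in `B`,
the two copies are non-adjacent, and all other adjacencies are unchanged. -/
def splitGraph {V : Type*} (G : SimpleGraph V) (u : V) (A B : Set V) :
    SimpleGraph (Option V) where
  Adj x y :=
    match x, y with
    | some a, some b =>
        (a ≠ u ∧ b ≠ u ∧ G.Adj a b) ∨ (a = u ∧ b ≠ u ∧ b ∈ A) ∨ (b = u ∧ a ≠ u ∧ a ∈ A)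
    | some a, none => a ≠ u ∧ a ∈ B
    | none, some b => b ≠ u ∧ b ∈ B
    | none, none => False
  symm := by
    constructor
    rintro (_ | a) (_ | b) h
    · exact h
    · exact h
    · exact h
    · rcases h with ⟨h1, h2, h3⟩ | ⟨h1, h2, h3⟩ | ⟨h1, h2, h3⟩
      · exact Or.inl ⟨h2, h1, h3.symm⟩
      · exact Or.inr (Or.inr ⟨h1, h2, h3⟩)
      · exact Or.inr (Or.inl ⟨h1, h2, h3⟩)
  loopless := by
    constructor
    rintro (_ | a) h
    · exact h
    · rcases h with ⟨_, _, h3⟩ | ⟨h1, h2, _⟩ | ⟨h1, h2, _⟩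
      · exact G.irrefl h3
      · exact h2 h1
      · exact h2 h1

open Finset

lemma existsUnique_mem_image_iff {α β : Type*} [DecidableEq β] {f : α → β}
    (hf : Function.Injective f) {s : Finset α} {p : β → Prop} :
    (∃! b, b ∈ s.image f ∧ p b) ↔ ∃! a, a ∈ s ∧ p (f a) := by
  constructor
  · rintro ⟨b, ⟨hb, hpb⟩, huniq⟩
    obtain ⟨a, ha, rfl⟩ := mem_image.1 hb
    exact ⟨a, ⟨ha, hpb⟩, fun a' ha' => hf (huniq _ ⟨mem_image_of_mem f ha'.1, ha'.2⟩)⟩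
  · rintro ⟨a, ⟨ha, hpa⟩, huniq⟩
    refine ⟨f a, ⟨mem_image_of_mem f ha, hpa⟩, ?_⟩
    rintro b ⟨hb, hpb⟩
    obtain ⟨a', ha', rfl⟩ := mem_image.1 hb
    rw [huniq a' ⟨ha', hpb⟩]

section EdgePartition

variable {V : Type*} {G : SimpleGraph V} {d : ℕ} {P : Finset (Finset V)}

lemma KEdgePartition.eq_of_mem_of_mem (hP : KEdgePartition G d P) {Q R : Finset V}
    (hQ : Q ∈ P) (hR : R ∈ P) {a b : V} (hab : a ≠ b) (haQ : a ∈ Q) (hbQ : b ∈ Q)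
    (haR : a ∈ R) (hbR : b ∈ R) : Q = R :=
  (hP.2 a b ((hP.1 Q hQ).1 haQ hbQ hab)).unique ⟨hQ, haQ, hbQ⟩ ⟨hR, haR, hbR⟩

lemma splitGraph_neighborSet_diff_adj_some_some {u a b : V} {B : Set V} :
    (splitGraph G u (G.neighborSet u \ B) B).Adj (some a) (some b) ↔
      G.Adj a b ∧ (a = u → b ∉ B) ∧ (b = u → a ∉ B) := by
  simp only [splitGraph, SimpleGraph.mem_neighborSet, Set.mem_sdiff]
  constructor
  · rintro (⟨hau, hbu, h⟩ | ⟨rfl, hb, h, hB⟩ | ⟨rfl, ha, h, hB⟩)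
    · exact ⟨h, fun ha => absurd ha hau, fun hb => absurd hb hbu⟩
    · exact ⟨h, fun _ => hB, fun h' => absurd h' hb⟩
    · exact ⟨h.symm, fun h' => absurd h' ha, fun _ => hB⟩
  · rintro ⟨h, hau, hbu⟩
    by_cases ha : a = u
    · subst ha
      exact Or.inr (Or.inl ⟨rfl, h.ne.symm, h, hau rfl⟩)
    · by_cases hb : b = u
      · subst hb
        exact Or.inr (Or.inr ⟨rfl, ha, h.symm, hbu rfl⟩)
      · exact Or.inl ⟨ha, hb, h⟩

end EdgePartition

section Frequency

variable {V : Type*}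

lemma exists_two_le_freqP_of_costP_ne_zero [Fintype V] [DecidableEq V] {P : Finset (Finset V)}
    (h : costP P ≠ 0) : ∃ u, 2 ≤ freqP P u := by
  by_contra! hlt
  exact h (sum_eq_zero fun v _ => by have := hlt v; omega)

lemma freqP_image {W : Type*} [DecidableEq W] {f : Finset V → Finset W}
    (hf : Function.Injective f) (P : Finset (Finset V)) (x : W) :
    freqP (P.image f) x = #(P.filter fun Q => x ∈ f Q) := by
  rw [freqP, filter_image, card_image_of_injective _ hf]

end Frequency

section LiftPart

variable {V : Type*} [DecidableEq V] (Q₀ : Finset V) (u : V)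

def liftPart (Q : Finset V) : Finset (Option V) :=
  if Q = Q₀ then insert none ((Q.erase u).image some) else Q.image some

variable {Q₀ u}

@[simp]
lemma none_mem_liftPart {Q : Finset V} : none ∈ liftPart Q₀ u Q ↔ Q = Q₀ := by
  unfold liftPart
  split_ifs with h <;> simp [h]

@[simp]
lemma some_mem_liftPart {Q : Finset V} {x : V} :
    some x ∈ liftPart Q₀ u Q ↔ x ∈ Q ∧ (Q = Q₀ → x ≠ u) := by
  unfold liftPart
  split_ifs with h <;> simp [h, and_comm]

lemma liftPart_injective : Function.Injective (liftPart Q₀ u) := by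
  intro Q R h
  have hnone : Q = Q₀ ↔ R = Q₀ := by
    rw [← none_mem_liftPart (u := u), h, none_mem_liftPart]
  by_cases hQ : Q = Q₀
  · rw [hQ, hnone.1 hQ]
  · ext x
    have hx := congrArg (some x ∈ ·) h
    simpa [hQ, ← hnone] using hx

variable {G : SimpleGraph V} {d : ℕ} {P : Finset (Finset V)}

lemma card_liftPart (hu : u ∈ Q₀) (Q : Finset V) : #(liftPart Q₀ u Q) = #Q := by
  unfold liftPart
  split_ifs with h
  · subst h
    rw [card_insert_of_notMem (by simp), card_image_of_injective _ (Option.some_injective V),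
      card_erase_add_one hu]
  · exact card_image_of_injective _ (Option.some_injective V)

abbrev splitAtPart (G : SimpleGraph V) (Q₀ : Finset V) (u : V) : SimpleGraph (Option V) :=
  splitGraph G u (G.neighborSet u \ ↑(Q₀.erase u)) ↑(Q₀.erase u)

lemma isClique_liftPart (hP : KEdgePartition G d P) (hQ₀ : Q₀ ∈ P) (hu : u ∈ Q₀) {Q : Finset V}
    (hQ : Q ∈ P) : (splitAtPart G Q₀ u).IsClique ↑(liftPart Q₀ u Q) := by
  rintro (_ | a) ha (_ | b) hb hab
  · exact absurd rfl hab
  · simp only [mem_coe, none_mem_liftPart, some_mem_liftPart] at ha hb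
    exact ⟨hb.2 ha, mem_erase.2 ⟨hb.2 ha, ha ▸ hb.1⟩⟩
  · simp only [mem_coe, none_mem_liftPart, some_mem_liftPart] at ha hb
    exact ⟨ha.2 hb, mem_erase.2 ⟨ha.2 hb, hb ▸ ha.1⟩⟩
  · simp only [mem_coe, some_mem_liftPart] at ha hb
    have hab' : a ≠ b := fun h => hab (congrArg some h)
    rw [splitGraph_neighborSet_diff_adj_some_some]
    refine ⟨(hP.1 Q hQ).1 ha.1 hb.1 hab', ?_, ?_⟩
    · rintro rfl hbB
      rw [mem_coe, mem_erase] at hbB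
      exact ha.2 (hP.eq_of_mem_of_mem hQ hQ₀ hab' ha.1 hb.1 hu hbB.2) rfl
    · rintro rfl haB
      rw [mem_coe, mem_erase] at haB
      exact hb.2 (hP.eq_of_mem_of_mem hQ hQ₀ hab'.symm hb.1 ha.1 hu haB.2) rfl

lemma existsUnique_liftPart_none_some (hQ₀ : Q₀ ∈ P) {b : V} (hb : b ∈ Q₀) (hbu : b ≠ u) :
    ∃! Q, Q ∈ P ∧ none ∈ liftPart Q₀ u Q ∧ some b ∈ liftPart Q₀ u Q :=
  ⟨Q₀, ⟨hQ₀, by simp, by simp [hb, hbu]⟩, fun _ hQ => none_mem_liftPart.1 hQ.2.1⟩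

lemma existsUnique_liftPart_some_some (hP : KEdgePartition G d P) {a b : V}
    (hab : (splitAtPart G Q₀ u).Adj (some a) (some b)) :
    ∃! Q, Q ∈ P ∧ some a ∈ liftPart Q₀ u Q ∧ some b ∈ liftPart Q₀ u Q := by
  obtain ⟨hGab, hau, hbu⟩ := splitGraph_neighborSet_diff_adj_some_some.1 hab
  obtain ⟨Q, ⟨hQ, haQ, hbQ⟩, huniq⟩ := hP.2 a b hGab
  refine ⟨Q, ⟨hQ, some_mem_liftPart.2 ⟨haQ, ?_⟩, some_mem_liftPart.2 ⟨hbQ, ?_⟩⟩, ?_⟩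
  · rintro rfl rfl
    exact hau rfl (mem_erase.2 ⟨hGab.ne.symm, hbQ⟩)
  · rintro rfl rfl
    exact hbu rfl (mem_erase.2 ⟨hGab.ne, haQ⟩)
  · rintro R ⟨hR, haR, hbR⟩
    exact huniq R ⟨hR, (some_mem_liftPart.1 haR).1, (some_mem_liftPart.1 hbR).1⟩

theorem KEdgePartition.image_liftPart (hP : KEdgePartition G d P) (hQ₀ : Q₀ ∈ P)
    (hu : u ∈ Q₀) : KEdgePartition (splitAtPart G Q₀ u) d (P.image (liftPart Q₀ u)) := by
  refine ⟨?_, ?_⟩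
  · simp only [mem_image, forall_exists_index, and_imp]
    rintro _ Q hQ rfl
    exact ⟨isClique_liftPart hP hQ₀ hu hQ, (card_liftPart hu Q).trans (hP.1 Q hQ).2⟩
  · rintro (_ | a) (_ | b) hab <;> rw [existsUnique_mem_image_iff liftPart_injective]
    · exact hab.elim
    · exact existsUnique_liftPart_none_some hQ₀ (mem_erase.1 hab.2).2 hab.1
    · simpa only [and_comm (a := some a ∈ _)] using
        existsUnique_liftPart_none_some hQ₀ (mem_erase.1 hab.2).2 hab.1
    · exact existsUnique_liftPart_some_some hP hab

lemma freqP_image_liftPart_none (hQ₀ : Q₀ ∈ P) :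
    freqP (P.image (liftPart Q₀ u)) none = 1 := by
  rw [freqP_image liftPart_injective, card_eq_one]
  exact ⟨Q₀, by ext Q; simp only [mem_filter, none_mem_liftPart, mem_singleton]; grind⟩

lemma freqP_image_liftPart_some (hQ₀ : Q₀ ∈ P) (hu : u ∈ Q₀) (v : V) :
    freqP (P.image (liftPart Q₀ u)) (some v) + (if v = u then 1 else 0) = freqP P v := by
  rw [freqP_image liftPart_injective, freqP]
  split_ifs with hv
  · subst hv
    have : P.filter (fun Q => some v ∈ liftPart Q₀ v Q) = (P.filter (v ∈ ·)).erase Q₀ := by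
      ext Q; simp only [mem_filter, some_mem_liftPart, mem_erase]; grind
    rw [this, card_erase_add_one (mem_filter.2 ⟨hQ₀, hu⟩)]
  · simp [hv]

lemma costP_image_liftPart [Fintype V] (hQ₀ : Q₀ ∈ P) (hu : u ∈ Q₀) (hu2 : 2 ≤ freqP P u) :
    costP (P.image (liftPart Q₀ u)) + 1 = costP P := by
  have hfreq (v : V) : freqP P v - 1 =
      (freqP (P.image (liftPart Q₀ u)) (some v) - 1) + if v = u then 1 else 0 := by
    have := freqP_image_liftPart_some hQ₀ hu v
    split_ifs at this ⊢ with hv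
    · subst hv; omega
    · omega
  simp only [costP, Fintype.sum_option, freqP_image_liftPart_none hQ₀, hfreq, sum_add_distrib,
    sum_ite_eq', mem_univ, if_true]
  omega

end LiftPart

theorem stmt11_general {V : Type*} [Fintype V] [DecidableEq V] (d : ℕ)
    (G : SimpleGraph V)
    (P : Finset (Finset V)) (k : ℕ) (hk : 1 ≤ k)
    (hP : KEdgePartition G d P) (hcost : costP P = k) :
    ∃ (u : V) (A B : Set V), A ∪ B = G.neighborSet u ∧ A ∩ B = ∅ ∧
      ∃ P' : Finset (Finset (Option V)),
        KEdgePartition (splitGraph G u A B) d P' ∧ costP P' = k - 1 := by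
  obtain ⟨u, hu2⟩ := exists_two_le_freqP_of_costP_ne_zero (P := P) (by omega)
  obtain ⟨Q₀, hQ₀u⟩ : (P.filter (u ∈ ·)).Nonempty := card_pos.1 (by rw [freqP] at hu2; omega)
  obtain ⟨hQ₀, hu⟩ := mem_filter.1 hQ₀u
  have hB : (↑(Q₀.erase u) : Set V) ⊆ G.neighborSet u := fun b hb =>
    (hP.1 Q₀ hQ₀).1 hu (mem_erase.1 hb).2 (mem_erase.1 hb).1.symm
  refine ⟨u, _, _, Set.sdiff_union_of_subset hB, Set.sdiff_inter_self, _,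
    hP.image_liftPart hQ₀ hu, ?_⟩
  have := costP_image_liftPart hQ₀ hu hu2
  omega

/-- If `G` (with no isolated vertices) admits a `K_d`-edge partition of cost `k ≥ 1`
(`d ≥ 2`), then some exclusive vertex split of `G` produces a graph admitting a
`K_d`-edge partition of cost `k - 1`. -/
theorem stmt11 {V : Type*} [Fintype V] [DecidableEq V] (d : ℕ) (hd : 2 ≤ d)
    (G : SimpleGraph V) (hiso : ∀ v : V, (G.neighborSet v).Nonempty)
    (P : Finset (Finset V)) (k : ℕ) (hk : 1 ≤ k)
    (hP : KEdgePartition G d P) (hcost : costP P = k) :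
    ∃ (u : V) (A B : Set V), A ∪ B = G.neighborSet u ∧ A ∩ B = ∅ ∧
      ∃ P' : Finset (Finset (Option V)),
        KEdgePartition (splitGraph G u A B) d P' ∧ costP P' = k - 1 :=
  stmt11_general d G P k hk hP hcost

end Paper
end

section
/- Let G = (V,E) be a finite simple graph without isolated vertices, α a natural number, and 𝒞 a sigma uniform clique cover of G with wgt(𝒞) ≤ |V| + α. Then either G is a uniform cluster graph, or there exist a vertex u ∈ V and sets A, B ⊆ N_G(u) with A ∪ B = N_G(u) such that the split G′ of G at u along (A,B) satisfies: (1) G′ admits a sigma uniform clique cover 𝒞′ with wgt(𝒞′) ≤ |V(G′)| + α − 1 (where |V(G′)| = |V| + 1), and (2) G′ has no isolated vertices. -/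
/-! If every vertex lies in at most one member of the cover, the connected components of `G` are
exactly the members of the cover, hence cliques of the common size. Otherwise some vertex `u`
lies in two members, `C = Q₁ + D` with `u ∈ Q₁` and `u ∈ Q₂ ∈ D`. Split `u` so that `u` keeps
its neighbours in `Q₁` and the new copy `u*` takes those it shares with members of `D`.
Replacing `u` by `u*` in every member of `D` gives a uniform cover of the split graph with the
same weight, while the number of vertices grows by one. Both copies keep a neighbour because
`Q₁` and `Q₂` have at least two vertices. -/

namespace Paper

/-- A sigma `s`-clique cover of `G`: a multiset of vertex sets, each inducing a clique on
exactly `s` vertices, such that every edge of `G` has both endpoints in some member. -/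
def IsSigmaCliqueCover {V : Type*} (G : SimpleGraph V) (s : ℕ)
    (C : Multiset (Finset V)) : Prop :=
  (∀ Q ∈ C, G.IsClique (Q : Set V) ∧ Q.card = s) ∧
  (∀ x y : V, G.Adj x y → ∃ Q ∈ C, x ∈ Q ∧ y ∈ Q)

/-- A sigma uniform clique cover of `G`: a multiset of vertex sets, each inducing a clique,
all of the same cardinality, such that every edge of `G` has both endpoints in some member. -/
def IsSigmaUniformCover {V : Type*} (G : SimpleGraph V) (C : Multiset (Finset V)) : Prop :=
  (∀ Q ∈ C, G.IsClique (Q : Set V)) ∧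
  (∃ s : ℕ, ∀ Q ∈ C, Q.card = s) ∧
  (∀ x y : V, G.Adj x y → ∃ Q ∈ C, x ∈ Q ∧ y ∈ Q)

/-- `freq_𝒞(v)`: the number of members of `𝒞` containing `v` (with multiplicity). -/
def freqC {V : Type*} [DecidableEq V] (C : Multiset (Finset V)) (v : V) : ℕ :=
  (C.filter fun Q => v ∈ Q).card

/-- `cost(𝒞) = Σ_v max(0, freq_𝒞(v) - 1)`. -/
def costC {V : Type*} [Fintype V] [DecidableEq V] (C : Multiset (Finset V)) : ℕ :=
  ∑ v : V, (freqC C v - 1)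

/-- `wgt(𝒞) = Σ_v freq_𝒞(v)`. -/
def wgt {V : Type*} [Fintype V] [DecidableEq V] (C : Multiset (Finset V)) : ℕ :=
  ∑ v : V, freqC C v

/-- A uniform cluster graph: every connected component induces a clique and all connected
components have the same number of vertices. -/
def IsUniformCluster {V : Type*} (G : SimpleGraph V) : Prop :=
  IsClusterGraph G ∧ ∀ v w : V, (compSet G v).ncard = (compSet G w).ncard

section

variable {V : Type*}

theorem exists_cons_of_one_lt_freqC [DecidableEq V] {C : Multiset (Finset V)} {u : V}
    (h : 1 < freqC C u) : ∃ Q₁ D, C = Q₁ ::ₘ D ∧ u ∈ Q₁ ∧ ∃ Q₂ ∈ D, u ∈ Q₂ := by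
  open Multiset in
  obtain ⟨Q₁, hQ₁⟩ := card_pos_iff_exists_mem.1 (zero_lt_one.trans h)
  obtain ⟨D, rfl⟩ := exists_cons_of_mem (mem_of_mem_filter hQ₁)
  have hu₁ := (mem_filter.1 hQ₁).2
  rw [freqC, filter_cons_of_pos (p := (u ∈ ·)) _ hu₁, card_cons, Nat.lt_add_left_iff_pos,
    card_pos_iff_exists_mem] at h
  obtain ⟨Q₂, hQ₂⟩ := h
  exact ⟨Q₁, D, rfl, hu₁, Q₂, mem_of_mem_filter hQ₂, (mem_filter.1 hQ₂).2⟩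

theorem wgt_eq_sum_card [Fintype V] [DecidableEq V] (C : Multiset (Finset V)) :
    wgt C = (C.map Finset.card).sum := by
  induction C using Multiset.induction with
  | empty => simp [wgt, freqC]
  | cons Q C ih =>
    rw [Multiset.map_cons, Multiset.sum_cons, ← ih]
    simp only [wgt, freqC, Multiset.filter_cons, Multiset.card_add, apply_ite Multiset.card,
      Multiset.card_singleton, Multiset.card_zero, Finset.sum_add_distrib, Finset.sum_boole,
      Finset.filter_mem_eq_inter, Finset.univ_inter, Nat.cast_id]

theorem eq_of_freqC_le_one [DecidableEq V] {C : Multiset (Finset V)} {v : V}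
    (h : freqC C v ≤ 1) {Q Q' : Finset V} (hQ : Q ∈ C) (hQ' : Q' ∈ C) (hv : v ∈ Q)
    (hv' : v ∈ Q') : Q = Q' := by
  by_contra hne
  have hle : {Q, Q'} ≤ C.filter (v ∈ ·) := by
    rw [Multiset.le_iff_subset (by simpa using hne)]
    simp [Multiset.insert_eq_cons, Multiset.cons_subset, hQ, hQ', hv, hv']
  simpa [freqC] using (Multiset.card_le_card hle).trans h

theorem IsClusterGraph.eq_or_adj_of_reachable {G : SimpleGraph V} (hG : IsClusterGraph G)
    {v w : V} (h : G.Reachable v w) : v = w ∨ G.Adj v w := by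
  obtain ⟨p⟩ := h
  induction p with
  | nil => exact Or.inl rfl
  | @cons a x c hax _ ih =>
    rcases ih with rfl | hxc
    · exact Or.inr hax
    · exact or_iff_not_imp_left.2 (hG hax hxc)

section Cluster

variable [DecidableEq V] {G : SimpleGraph V} {C : Multiset (Finset V)}

theorem isClusterGraph_of_freqC_le_one (hclq : ∀ Q ∈ C, G.IsClique (Q : Set V))
    (hcov : ∀ x y, G.Adj x y → ∃ Q ∈ C, x ∈ Q ∧ y ∈ Q) (hfreq : ∀ v, freqC C v ≤ 1) :
    IsClusterGraph G := by
  intro x y z hxy hyz hxz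
  obtain ⟨Q, hQ, hxQ, hyQ⟩ := hcov x y hxy
  obtain ⟨Q', hQ', hyQ', hzQ'⟩ := hcov y z hyz
  obtain rfl := eq_of_freqC_le_one (hfreq y) hQ hQ' hyQ hyQ'
  exact hclq Q hQ hxQ hzQ' hxz

theorem compSet_eq_of_freqC_le_one (hclq : ∀ Q ∈ C, G.IsClique (Q : Set V))
    (hcov : ∀ x y, G.Adj x y → ∃ Q ∈ C, x ∈ Q ∧ y ∈ Q) (hfreq : ∀ v, freqC C v ≤ 1)
    {Q : Finset V} (hQ : Q ∈ C) {v : V} (hv : v ∈ Q) : compSet G v = Q := by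
  ext w
  constructor
  · intro hvw
    rcases (isClusterGraph_of_freqC_le_one hclq hcov hfreq).eq_or_adj_of_reachable hvw
      with rfl | hadj
    · exact hv
    · obtain ⟨Q', hQ', hvQ', hwQ'⟩ := hcov v w hadj
      rwa [eq_of_freqC_le_one (hfreq v) hQ hQ' hv hvQ']
  · intro hw
    obtain rfl | hne := eq_or_ne v w
    · exact SimpleGraph.Reachable.refl v
    · exact (hclq Q hQ hv hw hne).reachable

theorem isUniformCluster_of_freqC_le_one (hC : IsSigmaUniformCover G C)
    (hiso : ∀ v, (G.neighborSet v).Nonempty) (hfreq : ∀ v, freqC C v ≤ 1) :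
    IsUniformCluster G := by
  obtain ⟨hclq, ⟨s, hs⟩, hcov⟩ := hC
  have hcomp (v : V) : (compSet G v).ncard = s := by
    obtain ⟨b, hb⟩ := hiso v
    obtain ⟨Q, hQ, hvQ, -⟩ := hcov v b hb
    rw [compSet_eq_of_freqC_le_one hclq hcov hfreq hQ hvQ, Set.ncard_coe_finset, hs Q hQ]
  exact ⟨isClusterGraph_of_freqC_le_one hclq hcov hfreq, fun v w => by rw [hcomp v, hcomp w]⟩

end Cluster

section Split

variable {G : SimpleGraph V} {u : V} {A B : Set V}

def nbhdIn (C : Multiset (Finset V)) (u : V) : Set V :=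
  {b | b ≠ u ∧ ∃ Q ∈ C, u ∈ Q ∧ b ∈ Q}

theorem nbhdIn_add (C₁ C₂ : Multiset (Finset V)) (u : V) :
    nbhdIn (C₁ + C₂) u = nbhdIn C₁ u ∪ nbhdIn C₂ u := by
  ext b
  simp only [nbhdIn, Set.mem_ofPred_eq, Set.mem_union, Multiset.mem_add, or_and_right,
    exists_or, and_or_left]

theorem nbhdIn_eq_neighborSet {C : Multiset (Finset V)}
    (hclq : ∀ Q ∈ C, G.IsClique (Q : Set V))
    (hcov : ∀ x y, G.Adj x y → ∃ Q ∈ C, x ∈ Q ∧ y ∈ Q) (u : V) :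
    nbhdIn C u = G.neighborSet u := by
  ext b
  constructor
  · rintro ⟨hbu, Q, hQ, huQ, hbQ⟩
    exact hclq Q hQ huQ hbQ hbu.symm
  · intro hub
    exact ⟨(G.ne_of_adj hub).symm, hcov u b hub⟩

theorem nbhdIn_nonempty {C : Multiset (Finset V)} {Q : Finset V} (hQ : Q ∈ C) (hu : u ∈ Q)
    (hQ₂ : 1 < Q.card) : (nbhdIn C u).Nonempty := by
  obtain ⟨a, ha, b, hb, hab⟩ := Finset.one_lt_card.1 hQ₂
  obtain rfl | hau := eq_or_ne a u
  · exact ⟨b, hab.symm, Q, hQ, hu, hb⟩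
  · exact ⟨a, hau, Q, hQ, hu, ha⟩

theorem splitGraph_adj_some_some {a b : V} (h : G.Adj a b) (ha : a = u → b ∈ A)
    (hb : b = u → a ∈ A) : (splitGraph G u A B).Adj (some a) (some b) := by
  show (a ≠ u ∧ b ≠ u ∧ G.Adj a b) ∨ (a = u ∧ b ≠ u ∧ b ∈ A) ∨ (b = u ∧ a ≠ u ∧ a ∈ A)
  by_cases hau : a = u
  · subst hau; exact Or.inr (Or.inl ⟨rfl, h.ne.symm, ha rfl⟩)
  by_cases hbu : b = u
  · subst hbu; exact Or.inr (Or.inr ⟨rfl, hau, hb rfl⟩)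
  exact Or.inl ⟨hau, hbu, h⟩

theorem splitGraph_adj_some_none {a : V} (ha : a ≠ u) (haB : a ∈ B) :
    (splitGraph G u A B).Adj (some a) none :=
  ⟨ha, haB⟩

theorem splitGraph_exists_adj (hiso : ∀ v, (G.neighborSet v).Nonempty)
    (hA : A ⊆ G.neighborSet u) (hB : B ⊆ G.neighborSet u) (hAB : G.neighborSet u ⊆ A ∪ B)
    (hAne : A.Nonempty) (hBne : B.Nonempty) (x : Option V) :
    ∃ y, (splitGraph G u A B).Adj x y := by
  rcases x with _ | a
  · obtain ⟨b, hb⟩ := hBne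
    exact ⟨some b, (splitGraph_adj_some_none (hB hb).ne' hb).symm⟩
  obtain rfl | hau := eq_or_ne a u
  · obtain ⟨b, hb⟩ := hAne
    exact ⟨some b, splitGraph_adj_some_some (hA hb) (fun _ => hb) fun h => absurd h (hA hb).ne'⟩
  obtain ⟨b, hab⟩ := hiso a
  obtain rfl | hbu := eq_or_ne b u
  · rcases hAB hab.symm with haA | haB
    · exact ⟨some b, splitGraph_adj_some_some hab (fun h => absurd h hau) fun _ => haA⟩
    · exact ⟨none, splitGraph_adj_some_none hau haB⟩
  · exact ⟨some b, splitGraph_adj_some_some hab (fun h => absurd h hau) fun h => absurd h hbu⟩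

end Split

section SplitCover

variable [DecidableEq V] {G : SimpleGraph V} {u : V} {A B : Set V}

def toCopy (u : V) : V ↪ Option V where
  toFun v := if v = u then none else some v
  inj' a b h := by by_cases ha : a = u <;> by_cases hb : b = u <;> simp_all

@[simp] theorem toCopy_self (u : V) : toCopy u u = none := if_pos rfl

theorem toCopy_of_ne {v : V} (hv : v ≠ u) : toCopy u v = some v := if_neg hv

theorem splitGraph_adj_toCopy {a b : V} (h : G.Adj a b) (ha : a = u → b ∈ B)
    (hb : b = u → a ∈ B) : (splitGraph G u A B).Adj (toCopy u a) (toCopy u b) := by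
  by_cases hau : a = u
  · subst hau
    rw [toCopy_self, toCopy_of_ne h.ne.symm]
    exact (splitGraph_adj_some_none h.ne.symm (ha rfl)).symm
  by_cases hbu : b = u
  · subst hbu
    rw [toCopy_self, toCopy_of_ne hau]
    exact splitGraph_adj_some_none hau (hb rfl)
  rw [toCopy_of_ne hau, toCopy_of_ne hbu]
  exact splitGraph_adj_some_some h (absurd · hau) (absurd · hbu)

def splitCover (u : V) (Q₁ : Finset V) (D : Multiset (Finset V)) :
    Multiset (Finset (Option V)) :=
  Q₁.map .some ::ₘ D.map (Finset.map (toCopy u))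

theorem some_mem_map_toCopy {Q : Finset V} {a : V} (ha : a ∈ Q) (hau : a ≠ u) :
    some a ∈ Q.map (toCopy u) :=
  toCopy_of_ne hau ▸ Finset.mem_map_of_mem _ ha

theorem none_mem_map_toCopy {Q : Finset V} (hu : u ∈ Q) : none ∈ Q.map (toCopy u) :=
  toCopy_self u ▸ Finset.mem_map_of_mem _ hu

variable {Q₁ : Finset V} {D : Multiset (Finset V)}

theorem isClique_of_mem_splitCover (hclq : ∀ Q ∈ Q₁ ::ₘ D, G.IsClique (Q : Set V))
    (hu : u ∈ Q₁) :
    ∀ R ∈ splitCover u Q₁ D,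
      (splitGraph G u (nbhdIn {Q₁} u) (nbhdIn D u)).IsClique (R : Set (Option V)) := by
  simp only [splitCover, Multiset.forall_mem_cons, Multiset.forall_mem_map_iff, Finset.coe_map]
  refine ⟨Set.Pairwise.image fun a ha b hb hab => ?_,
    fun Q hQ => Set.Pairwise.image fun a ha b hb hab => ?_⟩
  · exact splitGraph_adj_some_some (hclq Q₁ (Multiset.mem_cons_self _ _) ha hb hab)
      (by rintro rfl; exact ⟨hab.symm, Q₁, Multiset.mem_singleton_self _, hu, hb⟩)
      (by rintro rfl; exact ⟨hab, Q₁, Multiset.mem_singleton_self _, hu, ha⟩)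
  · exact splitGraph_adj_toCopy (hclq Q (Multiset.mem_cons_of_mem hQ) ha hb hab)
      (by rintro rfl; exact ⟨hab.symm, Q, hQ, ha, hb⟩)
      (by rintro rfl; exact ⟨hab, Q, hQ, hb, ha⟩)

theorem exists_mem_splitCover_of_adj (hcov : ∀ x y, G.Adj x y → ∃ Q ∈ Q₁ ::ₘ D, x ∈ Q ∧ y ∈ Q)
    (hu : u ∈ Q₁) {a : V} {y : Option V}
    (hadj : (splitGraph G u (nbhdIn {Q₁} u) (nbhdIn D u)).Adj (some a) y) :
    ∃ R ∈ splitCover u Q₁ D, some a ∈ R ∧ y ∈ R := by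
  have hmem₁ : Q₁.map .some ∈ splitCover u Q₁ D := Multiset.mem_cons_self _ _
  have hmem {Q : Finset V} (hQ : Q ∈ D) : Q.map (toCopy u) ∈ splitCover u Q₁ D :=
    Multiset.mem_cons_of_mem (Multiset.mem_map_of_mem _ hQ)
  rcases y with _ | b
  · obtain ⟨hau, -, Q, hQ, huQ, haQ⟩ := hadj
    exact ⟨_, hmem hQ, some_mem_map_toCopy haQ hau, none_mem_map_toCopy huQ⟩
  rcases hadj with ⟨hau, hbu, hab⟩ | ⟨rfl, -, -, Q, hQ, -, hb⟩ | ⟨rfl, -, -, Q, hQ, -, ha⟩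
  · obtain ⟨Q, hQ, haQ, hbQ⟩ := hcov a b hab
    rcases Multiset.mem_cons.1 hQ with rfl | hQ
    · exact ⟨_, hmem₁, Finset.mem_map_of_mem _ haQ, Finset.mem_map_of_mem _ hbQ⟩
    · exact ⟨_, hmem hQ, some_mem_map_toCopy haQ hau, some_mem_map_toCopy hbQ hbu⟩
  · obtain rfl := Multiset.mem_singleton.1 hQ
    exact ⟨_, hmem₁, Finset.mem_map_of_mem _ hu, Finset.mem_map_of_mem _ hb⟩
  · obtain rfl := Multiset.mem_singleton.1 hQ
    exact ⟨_, hmem₁, Finset.mem_map_of_mem _ ha, Finset.mem_map_of_mem _ hu⟩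

theorem isSigmaUniformCover_splitCover (hC : IsSigmaUniformCover G (Q₁ ::ₘ D)) (hu : u ∈ Q₁) :
    IsSigmaUniformCover (splitGraph G u (nbhdIn {Q₁} u) (nbhdIn D u)) (splitCover u Q₁ D) := by
  obtain ⟨hclq, ⟨s, hs⟩, hcov⟩ := hC
  refine ⟨isClique_of_mem_splitCover hclq hu, ⟨s, ?_⟩, ?_⟩
  · simp only [splitCover, Multiset.forall_mem_cons, Multiset.forall_mem_map_iff,
      Finset.card_map]
    exact ⟨hs Q₁ (Multiset.mem_cons_self _ _), fun Q hQ => hs Q (Multiset.mem_cons_of_mem hQ)⟩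
  rintro (_ | a) y hxy
  · rcases y with _ | b
    · exact hxy.elim
    · obtain ⟨R, hR, hb, hnone⟩ := exists_mem_splitCover_of_adj hcov hu hxy.symm
      exact ⟨R, hR, hnone, hb⟩
  · exact exists_mem_splitCover_of_adj hcov hu hxy

theorem wgt_splitCover [Fintype V] (u : V) (Q₁ : Finset V) (D : Multiset (Finset V)) :
    wgt (splitCover u Q₁ D) = wgt (Q₁ ::ₘ D) := by
  simp [wgt_eq_sum_card, splitCover, Multiset.map_map]

end SplitCover

theorem IsSigmaUniformCover.one_lt_card [Nonempty V] {G : SimpleGraph V}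
    {C : Multiset (Finset V)} (hC : IsSigmaUniformCover G C)
    (hiso : ∀ v, (G.neighborSet v).Nonempty) {Q : Finset V} (hQ : Q ∈ C) : 1 < Q.card := by
  obtain ⟨-, ⟨s, hs⟩, hcov⟩ := hC
  obtain ⟨v⟩ := ‹Nonempty V›
  obtain ⟨b, hb⟩ := hiso v
  obtain ⟨Q', hQ', hvQ', hbQ'⟩ := hcov v b hb
  rw [hs Q hQ, ← hs Q' hQ']
  exact Finset.one_lt_card.2 ⟨v, hvQ', b, hbQ', hb.ne⟩

end

/-- If `G` has no isolated vertices and admits a sigma uniform clique cover of weight at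
most `|V| + α`, then either `G` is already a uniform cluster graph, or some vertex split of
`G` produces a graph with no isolated vertices admitting a sigma uniform clique cover of
weight at most `|V| + 1 + α - 1`. -/
theorem stmt13 {V : Type*} [Fintype V] [DecidableEq V] (G : SimpleGraph V)
    (hiso : ∀ v : V, (G.neighborSet v).Nonempty) (α : ℕ)
    (C : Multiset (Finset V)) (hC : IsSigmaUniformCover G C)
    (hw : wgt C ≤ Fintype.card V + α) :
    IsUniformCluster G ∨
      ∃ (u : V) (A B : Set V), A ⊆ G.neighborSet u ∧ B ⊆ G.neighborSet u ∧
        A ∪ B = G.neighborSet u ∧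
        (∃ C' : Multiset (Finset (Option V)),
          IsSigmaUniformCover (splitGraph G u A B) C' ∧
          wgt C' ≤ Fintype.card (Option V) + α - 1) ∧
        (∀ x : Option V, ∃ y : Option V, (splitGraph G u A B).Adj x y) := by
  by_cases hfreq : ∀ v, freqC C v ≤ 1
  · exact Or.inl (isUniformCluster_of_freqC_le_one hC hiso hfreq)
  obtain ⟨u, hu⟩ : ∃ u, 1 < freqC C u := by simpa using hfreq
  have : Nonempty V := ⟨u⟩
  obtain ⟨Q₁, D, rfl, hu₁, Q₂, hQ₂, hu₂⟩ := exists_cons_of_one_lt_freqC hu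
  have hN : nbhdIn {Q₁} u ∪ nbhdIn D u = G.neighborSet u := by
    rw [← nbhdIn_add, Multiset.singleton_add, nbhdIn_eq_neighborSet hC.1 hC.2.2]
  have hA : (nbhdIn {Q₁} u).Nonempty := nbhdIn_nonempty (Multiset.mem_singleton_self Q₁) hu₁
    (hC.one_lt_card hiso (Multiset.mem_cons_self _ _))
  have hB : (nbhdIn D u).Nonempty := nbhdIn_nonempty hQ₂ hu₂
    (hC.one_lt_card hiso (Multiset.mem_cons_of_mem hQ₂))
  refine Or.inr ⟨u, _, _, hN ▸ Set.subset_union_left, hN ▸ Set.subset_union_right, hN,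
    ⟨splitCover u Q₁ D, isSigmaUniformCover_splitCover hC hu₁, ?_⟩,
    splitGraph_exists_adj hiso (hN ▸ Set.subset_union_left) (hN ▸ Set.subset_union_right)
      hN.ge hA hB⟩
  rw [wgt_splitCover, Fintype.card_option]
  omega

end Paper
end

section
/- Let G = (V,E) be a finite simple graph, k a natural number, C ⊆ V a set of at least k+2 vertices inducing a clique in G, and F a set of unordered pairs of vertices with |F| ≤ k such that G △ F is a cluster graph. If s ∈ V ∖ C has at least k+1 neighbors (in G) inside C, then in G △ F the vertex s is adjacent to every vertex of C. -/
namespace Paper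

/-- `G` is a disjoint union of cliques each having exactly `c` vertices: every connected
component induces a clique on exactly `c` vertices. -/
def IsUniformClusterGraph {V : Type*} (G : SimpleGraph V) (c : ℕ) : Prop :=
  ∀ v : V, G.IsClique (compSet G v) ∧ (compSet G v).ncard = c

/-- `G △ F`: the graph whose edge set is the symmetric difference of the edge set of `G`
and `F`. -/
def symmDiffGraph {V : Type*} (G : SimpleGraph V) (F : Set (Sym2 V)) : SimpleGraph V :=
  SimpleGraph.fromEdgeSet (symmDiff G.edgeSet F)

/-- `G + F`: the graph whose edge set is the union of the edge set of `G` and `F`. -/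
def addEdges {V : Type*} (G : SimpleGraph V) (F : Set (Sym2 V)) : SimpleGraph V :=
  SimpleGraph.fromEdgeSet (G.edgeSet ∪ F)

/-!
Fix `x ∈ C`. Every neighbour `t` of `s` in `C` yields the edge `st` and, for `t ≠ x`, the path
`s - t - x` of `G`; the pairs `st` and `tx` arising this way are pairwise distinct, because
`s ∉ C`. Hence the at most `k` pairs of `F` can spoil at most `k` of the at least `k + 1`
vertices `t`, and an unspoiled `t` gives either the edge `sx` or a path `s - t - x` in `G △ F`,
which a cluster graph must close up to the edge `sx`.
-/

theorem exists_mem_apply_notMem_of_card_lt_ncard {α β : Type*} {T : Set α}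
    {F : Finset β} (f g : α → β) (hf : Set.InjOn f T) (hg : Set.InjOn g T)
    (hfg : ∀ t ∈ T, ∀ t' ∈ T, f t ≠ g t') (hcard : F.card < T.ncard) :
    ∃ t ∈ T, f t ∉ F ∧ g t ∉ F := by
  classical
  by_contra! hcover
  let pick : α → β := fun t => if f t ∈ F then f t else g t
  have hmaps : ∀ t ∈ T, pick t ∈ (F : Set β) := by
    intro t ht
    by_cases hft : f t ∈ F
    · simp only [pick, if_pos hft]; exact hft
    · simp only [pick, if_neg hft]; exact hcover t ht hft
  have hinj : Set.InjOn pick T := by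
    intro t ht t' ht' heq
    by_cases hft : f t ∈ F <;> by_cases hft' : f t' ∈ F <;>
      simp only [pick, hft, hft', if_true, if_false] at heq
    · exact hf ht ht' heq
    · exact absurd heq (hfg t ht t' ht')
    · exact absurd heq.symm (hfg t' ht' t ht)
    · exact hg ht ht' heq
  have hle : T.ncard ≤ F.card :=
    (Set.ncard_le_ncard_of_injOn pick hmaps hinj).trans_eq (Set.ncard_coe_finset F)
  omega

theorem symmDiffGraph_adj_of_adj_of_notMem {V : Type*} {G : SimpleGraph V}
    {F : Set (Sym2 V)} {a b : V} (hab : G.Adj a b) (hF : s(a, b) ∉ F) :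
    (symmDiffGraph G F).Adj a b := by
  rw [symmDiffGraph, SimpleGraph.fromEdgeSet_adj]
  exact ⟨Set.mem_symmDiff.2 (Or.inl ⟨hab, hF⟩), hab.ne⟩

theorem exists_neighbor_edges_notMem {V : Type*} {G : SimpleGraph V} {C : Set V}
    {F : Finset (Sym2 V)} {s x : V} (hs : s ∉ C) (hx : x ∈ C)
    (hcard : F.card < (C ∩ G.neighborSet s).ncard) :
    ∃ t ∈ C ∩ G.neighborSet s, s(s, t) ∉ F ∧ s(t, x) ∉ F := by
  refine exists_mem_apply_notMem_of_card_lt_ncard (fun t => s(s, t)) (fun t => s(t, x))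
    (fun t _ t' _ h => Sym2.congr_right.1 h) (fun t _ t' _ h => Sym2.congr_left.1 h) ?_ hcard
  intro t _ t' ht' h
  have hmem : s ∈ s(t', x) := h ▸ Sym2.mem_mk_left s t
  rcases Sym2.mem_iff.1 hmem with rfl | rfl
  · exact hs ht'.1
  · exact hs hx

theorem stmt17_general {V : Type*} (G : SimpleGraph V) (k : ℕ)
    (C : Set V) (hCclique : G.IsClique C)
    (F : Finset (Sym2 V)) (hFcard : F.card ≤ k)
    (hcluster : IsClusterGraph (symmDiffGraph G (↑F : Set (Sym2 V))))
    (s : V) (hs : s ∉ C)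
    (hnbr : k + 1 ≤ (C ∩ G.neighborSet s).ncard) :
    ∀ x ∈ C, (symmDiffGraph G (↑F : Set (Sym2 V))).Adj s x := by
  intro x hx
  obtain ⟨t, ⟨htC, hst⟩, hstF, htxF⟩ := exists_neighbor_edges_notMem (G := G) (F := F) hs hx (by omega)
  have hst' : (symmDiffGraph G (↑F : Set (Sym2 V))).Adj s t :=
    symmDiffGraph_adj_of_adj_of_notMem hst hstF
  by_cases htx : t = x
  · exact htx ▸ hst'
  have htx' : (symmDiffGraph G (↑F : Set (Sym2 V))).Adj t x :=
    symmDiffGraph_adj_of_adj_of_notMem (hCclique htC hx htx) htxF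
  exact hcluster hst' htx' fun hsx => hs (hsx ▸ hx)

/-- If `C` is a clique of `G` on at least `k + 2` vertices, `|F| ≤ k`, `G △ F` is a cluster
graph, and `s ∉ C` has at least `k + 1` neighbors in `C` (in `G`), then in `G △ F` the
vertex `s` is adjacent to every vertex of `C`. -/
theorem stmt17 {V : Type*} [Fintype V] (G : SimpleGraph V) (k : ℕ)
    (C : Set V) (hCcard : k + 2 ≤ C.ncard) (hCclique : G.IsClique C)
    (F : Finset (Sym2 V)) (hFdiag : ∀ e ∈ F, ¬ e.IsDiag) (hFcard : F.card ≤ k)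
    (hcluster : IsClusterGraph (symmDiffGraph G (↑F : Set (Sym2 V))))
    (s : V) (hs : s ∉ C)
    (hnbr : k + 1 ≤ (C ∩ G.neighborSet s).ncard) :
    ∀ x ∈ C, (symmDiffGraph G (↑F : Set (Sym2 V))).Adj s x :=
  stmt17_general G k C hCclique F hFcard hcluster s hs hnbr

end Paper
end

section
/- Let G = (V,E) be a finite simple graph, k a natural number, C ⊆ V a set of at least k+2 vertices inducing a clique in G, and F a set of unordered pairs of vertices with |F| ≤ k such that G △ F is a cluster graph. If s ∈ V ∖ C has at least k+1 non-neighbors (in G) inside C, then in G △ F the vertex s is adjacent to no vertex of C. -/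
namespace Paper

lemma adj_symmDiffGraph {V : Type*} (G : SimpleGraph V) (F : Set (Sym2 V)) {a b : V} :
    (symmDiffGraph G F).Adj a b ↔
      ((G.Adj a b ∧ s(a,b) ∉ F) ∨ (¬ G.Adj a b ∧ s(a,b) ∈ F)) ∧ a ≠ b := by
  simp only [symmDiffGraph, SimpleGraph.fromEdgeSet_adj, symmDiff_def, Set.sup_eq_union,
    Set.mem_union, Set.mem_diff, SimpleGraph.mem_edgeSet]
  tauto

/-- If `C` is a clique of `G` on at least `k + 2` vertices, `|F| ≤ k`, `G △ F` is a cluster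
graph, and `s ∉ C` has at least `k + 1` non-neighbors in `C` (in `G`), then in `G △ F` the
vertex `s` is adjacent to no vertex of `C`. -/
theorem stmt18 {V : Type*} [Fintype V] (G : SimpleGraph V) (k : ℕ)
    (C : Set V) (hCcard : k + 2 ≤ C.ncard) (hCclique : G.IsClique C)
    (F : Finset (Sym2 V)) (hFdiag : ∀ e ∈ F, ¬ e.IsDiag) (hFcard : F.card ≤ k)
    (hcluster : IsClusterGraph (symmDiffGraph G (↑F : Set (Sym2 V))))
    (s : V) (hs : s ∉ C)
    (hnonnbr : k + 1 ≤ {x ∈ C | ¬ G.Adj s x}.ncard) :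
    ∀ x ∈ C, ¬ (symmDiffGraph G (↑F : Set (Sym2 V))).Adj s x := by
  classical
  intro x hx hadj
  set N : Set V := {y ∈ C | ¬ G.Adj s y} with hN
  set f : V → Sym2 V := fun y => if s(x,y) ∈ F then s(x,y) else s(s,y) with hf
  have hsne : ∀ y ∈ C, s ≠ y := fun y hy h => hs (h ▸ hy)
  -- for each y ∈ N, f y ∈ F
  have hmem : ∀ y ∈ N, f y ∈ F := by
    intro y hy
    obtain ⟨hyC, hyAdj⟩ := hy
    by_cases hcase : s(x,y) ∈ F
    · simpa [hf, hcase] using hcase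
    · simp only [hf, hcase, if_false]
      by_cases hxy : y = x
      · subst hxy
        -- then s-y adjacency in H with ¬G.Adj s y forces s(s,y) ∈ F
        rcases (adj_symmDiffGraph G _).1 hadj with ⟨h1 | h2, _⟩
        · exact absurd h1.1 hyAdj
        · exact h2.2
      · -- x-y edge survives in H
        have hGxy : G.Adj x y := hCclique hx hyC (Ne.symm hxy)
        have hHxy : (symmDiffGraph G (↑F : Set (Sym2 V))).Adj x y :=
          (adj_symmDiffGraph G _).2 ⟨Or.inl ⟨hGxy, hcase⟩, hGxy.ne⟩
        have hHsy := hcluster hadj hHxy (hsne y hyC)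
        rcases (adj_symmDiffGraph G _).1 hHsy with ⟨h1 | h2, _⟩
        · exact absurd h1.1 hyAdj
        · exact h2.2
  -- f is injective on N
  have hinj : Set.InjOn f N := by
    intro a ha b hb hab
    simp only [hf] at hab
    have hsa := hsne a ha.1
    have hsb := hsne b hb.1
    have hsx := hsne x hx
    by_cases h1 : s(x,a) ∈ F <;> by_cases h2 : s(x,b) ∈ F <;>
      simp only [h1, h2, if_true, if_false, Sym2.eq_iff] at hab <;> tauto
  -- conclude
  have hsub : f '' N ⊆ (↑F : Set (Sym2 V)) := by
    rintro e ⟨y, hy, rfl⟩; exact hmem y hy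
  have hcount : N.ncard ≤ F.card := by
    calc N.ncard = (f '' N).ncard := (Set.ncard_image_of_injOn hinj).symm
    _ ≤ (↑F : Set (Sym2 V)).ncard := Set.ncard_le_ncard hsub F.finite_toSet
    _ = F.card := by simp [Set.ncard_coe_finset]
  omega

end Paper
end

section
/- Let G = (V,E) be a finite simple graph that is a disjoint union of cliques, and let d, k be natural numbers with k < d. If some connected component of G has fewer than d+1 vertices, then there is no set F of unordered pairs of vertices with |F| ≤ k such that G + F is a disjoint union of cliques each having exactly d+1 vertices. -/
namespace Paper

/-- If `G` is a disjoint union of cliques, `k < d`, and some connected component of `G`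
has fewer than `d + 1` vertices, then there is no set `F` of at most `k` edges such that
`G + F` is a disjoint union of cliques each having exactly `d + 1` vertices. -/
theorem stmt19 {V : Type*} [Fintype V] (G : SimpleGraph V) (d k : ℕ) (hkd : k < d)
    (hcluster : IsClusterGraph G)
    (hsmall : ∃ v : V, (compSet G v).ncard < d + 1) :
    ¬ ∃ F : Finset (Sym2 V), (∀ e ∈ F, ¬ e.IsDiag) ∧ F.card ≤ k ∧
        IsUniformClusterGraph (addEdges G (↑F : Set (Sym2 V))) (d + 1) := by
  classical
  rintro ⟨F, hdiag, hFcard, huni⟩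
  obtain ⟨v, hv⟩ := hsmall
  set G' := addEdges G (↑F : Set (Sym2 V)) with hG'
  have hle : ∀ a b, G.Adj a b → G'.Adj a b := by
    intro a b hab
    simp only [hG', addEdges, SimpleGraph.fromEdgeSet_adj, Set.mem_union]
    exact ⟨Or.inl (by rwa [SimpleGraph.mem_edgeSet]), hab.ne⟩
  set C := compSet G v with hC
  set C' := compSet G' v with hC'
  have hsub : C ⊆ C' := by
    intro w hw
    exact SimpleGraph.Reachable.mono (fun a b h => hle a b h) hw
  obtain ⟨hclq, hcard'⟩ := huni v
  set D := C' \ C with hD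
  have hfinC' : C'.Finite := Set.toFinite _
  have hfinC : C.Finite := Set.toFinite _
  have hfinD : D.Finite := Set.toFinite _
  have hcardD : D.ncard = (d + 1) - C.ncard := by
    rw [hD, Set.ncard_diff hsub, hcard']
  -- v ∈ C
  have hvC : v ∈ C := SimpleGraph.Reachable.refl v
  have hCpos : 1 ≤ C.ncard := (Set.ncard_pos hfinC).mpr ⟨v, hvC⟩
  have hDpos : 1 ≤ D.ncard := by omega
  -- key: pairs go into F
  have hkey : ∀ u ∈ C, ∀ w ∈ D, s(u, w) ∈ F := by
    intro u hu w hw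
    have huw : u ≠ w := fun h => hw.2 (h ▸ hu)
    have hadj : G'.Adj u w := hclq (hsub hu) hw.1 huw
    have hnadj : ¬ G.Adj u w := by
      intro h
      exact hw.2 (SimpleGraph.Reachable.trans hu h.reachable)
    rw [hG', addEdges, SimpleGraph.fromEdgeSet_adj] at hadj
    rcases hadj.1 with h | h
    · exact absurd (G.mem_edgeSet.mp h) hnadj
    · exact h
  -- image of C ×ˢ D under Sym2.mk is a subset of F
  have hsubF : (fun p : V × V => s(p.1, p.2)) '' (C ×ˢ D) ⊆ (↑F : Set (Sym2 V)) := by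
    rintro e ⟨⟨u, w⟩, ⟨hu, hw⟩, rfl⟩
    exact hkey u hu w hw
  have hinj : Set.InjOn (fun p : V × V => s(p.1, p.2)) (C ×ˢ D) := by
    rintro ⟨u, w⟩ ⟨hu, hw⟩ ⟨u', w'⟩ ⟨hu', hw'⟩ h
    simp only [Sym2.eq_iff] at h
    rcases h with ⟨rfl, rfl⟩ | ⟨rfl, rfl⟩
    · rfl
    · exact (hw.2 hu').elim
  have h1 : ((fun p : V × V => s(p.1, p.2)) '' (C ×ˢ D)).ncard = (C ×ˢ D).ncard :=
    Set.ncard_image_of_injOn hinj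
  have h2 : (C ×ˢ D).ncard = C.ncard * D.ncard := by
    rw [Set.ncard_eq_toFinset_card' , Set.ncard_eq_toFinset_card', Set.ncard_eq_toFinset_card']
    rw [show (C ×ˢ D).toFinset = C.toFinset ×ˢ D.toFinset by ext; simp]
    exact Finset.card_product _ _
  have h3 : ((fun p : V × V => s(p.1, p.2)) '' (C ×ˢ D)).ncard ≤ F.card := by
    have := Set.ncard_le_ncard hsubF F.finite_toSet
    rwa [Set.ncard_coe_finset] at this
  have hCD : C.ncard * D.ncard ≥ d := by
    have hCle : C.ncard ≤ d := by omega
    have hsum : C.ncard + D.ncard = d + 1 := by omega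
    nlinarith [hCpos, hDpos, hsum]
  omega

end Paper
end
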